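/- Let W ∈ ℝ^{m×m} satisfy W𝟙 = 𝟙, let A ∈ ℝ^{n×n}, and let C_i ∈ ℝ^{r_i×n} for i = 1,…,m. If the pair (A, C) is not detectable — i.e., there exist a complex λ with |λ| ≥ 1 and a nonzero v ∈ ℂ^n with Av = λv and C_i v = 0 for all i — then the pair (W ⊗ A, C̄) is not detectable: the nonzero vector 𝟙 ⊗ v satisfies (W ⊗ A)(𝟙 ⊗ v) = λ(𝟙 ⊗ v) and C̄(𝟙 ⊗ v) = 0. -/

import Mathlib

open Matrix Kronecker

/-- The Kronecker product of two vectors: `(vecKron v w) (i, j) = v i * w j`. -/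
def vecKron {m n : ℕ} {F : Type*} [Mul F] (v : Fin m → F) (w : Fin n → F) :
    Fin m × Fin n → F :=
  fun p => v p.1 * w p.2

/-- The block-diagonal matrix C̄ whose i-th diagonal block is `C i`
(equivalently, whose i-th block row is eᵢᵀ ⊗ Cᵢ), complexified. -/
def Cbar {m n : ℕ} (r : Fin m → ℕ) (C : ∀ i : Fin m, Matrix (Fin (r i)) (Fin n) ℝ) :
    Matrix (Σ i : Fin m, Fin (r i)) (Fin m × Fin n) ℂ :=
  fun q p => if q.1 = p.1 then ((C q.1).map Complex.ofReal) q.2 p.2 else 0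

theorem vecKron_ne_zero {m n : ℕ} {F : Type*} [MulZeroClass F] [NoZeroDivisors F]
    {u : Fin m → F} {v : Fin n → F} (hu : u ≠ 0) (hv : v ≠ 0) : vecKron u v ≠ 0 := by
  obtain ⟨i, hi⟩ := Function.ne_iff.mp hu
  obtain ⟨j, hj⟩ := Function.ne_iff.mp hv
  exact Function.ne_iff.mpr ⟨(i, j), mul_ne_zero hi hj⟩

theorem kronecker_mulVec_vecKron {k l m n : ℕ} {R : Type*} [CommSemiring R]
    (A : Matrix (Fin k) (Fin m) R) (B : Matrix (Fin l) (Fin n) R)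
    (u : Fin m → R) (v : Fin n → R) :
    (A ⊗ₖ B) *ᵥ vecKron u v = vecKron (A *ᵥ u) (B *ᵥ v) := by
  ext ⟨i, j⟩
  simp only [mulVec, dotProduct, vecKron, kroneckerMap_apply, Fintype.sum_prod_type,
    Finset.sum_mul_sum, mul_mul_mul_comm]

theorem vecKron_smul_right {m n : ℕ} {R : Type*} [CommSemiring R]
    (u : Fin m → R) (c : R) (v : Fin n → R) : vecKron u (c • v) = c • vecKron u v := by
  ext
  simp only [vecKron, Pi.smul_apply, smul_eq_mul, mul_left_comm]

theorem Matrix.map_kronecker_of_map_mul {l m n p R S : Type*} [Mul R] [Mul S] {f : R → S}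
    (hf : ∀ a b, f (a * b) = f a * f b) (A : Matrix l m R) (B : Matrix n p R) :
    (A ⊗ₖ B).map f = A.map f ⊗ₖ B.map f := by
  ext
  simp only [map_apply, kroneckerMap_apply, hf]

theorem Cbar_mulVec_vecKron {m n : ℕ} (r : Fin m → ℕ)
    (C : ∀ i : Fin m, Matrix (Fin (r i)) (Fin n) ℝ) (u : Fin m → ℂ) (v : Fin n → ℂ)
    (i : Fin m) (s : Fin (r i)) :
    (Cbar r C *ᵥ vecKron u v) ⟨i, s⟩ = u i * ((C i).map Complex.ofReal *ᵥ v) s := by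
  simp [mulVec, dotProduct, Cbar, vecKron, Fintype.sum_prod_type, Finset.mul_sum, mul_left_comm]

theorem stmt9 (m n : ℕ) (hm : 0 < m) (r : Fin m → ℕ)
    (W : Matrix (Fin m) (Fin m) ℝ)
    (hW1 : W.mulVec (fun _ => 1) = fun _ => 1)
    (A : Matrix (Fin n) (Fin n) ℝ)
    (C : ∀ i : Fin m, Matrix (Fin (r i)) (Fin n) ℝ)
    (lam : ℂ)
    (v : Fin n → ℂ) (hv : v ≠ 0)
    (hAv : (A.map Complex.ofReal).mulVec v = lam • v)
    (hCv : ∀ i, ((C i).map Complex.ofReal).mulVec v = 0) :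
    vecKron (fun _ : Fin m => (1 : ℂ)) v ≠ 0 ∧
    ((W ⊗ₖ A).map Complex.ofReal).mulVec (vecKron (fun _ => (1 : ℂ)) v) =
      lam • vecKron (fun _ => (1 : ℂ)) v ∧
    (Cbar r C).mulVec (vecKron (fun _ => (1 : ℂ)) v) = 0 := by
  have hW1ℂ : W.map Complex.ofReal *ᵥ (fun _ => (1 : ℂ)) = fun _ => 1 := by
    ext i
    have h := RingHom.map_mulVec Complex.ofRealHom W (fun _ => 1) i
    simp only [hW1, Function.comp_def, map_one] at h
    exact h.symm
  refine ⟨vecKron_ne_zero (Function.ne_iff.mpr ⟨⟨0, hm⟩, one_ne_zero⟩) hv, ?_, ?_⟩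
  · rw [map_kronecker_of_map_mul Complex.ofReal_mul, kronecker_mulVec_vecKron, hW1ℂ, hAv,
      vecKron_smul_right]
  · ext ⟨i, s⟩
    rw [Cbar_mulVec_vecKron, hCv]
    simp
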